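/- Let $\{G \twoheadrightarrow G_i\}_{i \in I}$ be a finite separated collection of connected algebraic groups over a field (i.e., the induced morphism $G \to \prod_{i \in I} G_i$ is injective and each $G \to G_i$ is surjective). Suppose each $G_i$ is simple (nonabelian with no nontrivial connected normal subgroup). Then there is a partition $I = \bigsqcup_{h \in H} I_h$ and for each $h$ a subgroup $G^h \subseteq \prod_{i \in I_h} G_i$ which is an iso-graph over $\{G_i\}_{i \in I_h}$ (each projection $G^h \to G_i$ is an isomorphism), such that $G = \prod_{h \in H} G^h$ inside $\prod_{i \in I} G_i$. -/

import Mathlib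

/-!
Group the indices by the kernel `Kᵢ` of the projection `H → Gᵢ`. For any normal subgroup `N` of
`H`, its image in the simple group `Gᵢ` is `⊥` or `⊤`; so comparable kernels are equal, and
`Kⱼ` maps onto `Gᵢ` whenever `Kⱼ ≠ Kᵢ`. Since `Gᵢ` is perfect and `⁅N, M⁆ ≤ N ⊓ M`, images equal
to `⊤` survive finite intersections: the elements of `H` trivial outside the class of `i` still
project onto `Gᵢ`. Hence `H` contains the truncation of each of its elements to each class, and
`H` is the product of its restrictions to the classes, each of which is the graph of
isomorphisms because the coordinates in a class share a kernel.
-/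

section SurjectionsToSimpleGroups

variable {Γ Q : Type*} [Group Γ] [Group Q]

theorem Subgroup.Normal.map_eq_bot_or_eq_top [IsSimpleGroup Q] {N : Subgroup Γ} (hN : N.Normal)
    {φ : Γ →* Q} (hφ : Function.Surjective φ) : N.map φ = ⊥ ∨ N.map φ = ⊤ :=
  (hN.map φ hφ).eq_bot_or_eq_top

theorem IsSimpleGroup.commutator_top_eq_top [IsSimpleGroup Q] (hQ : ∃ a b : Q, a * b ≠ b * a) :
    ⁅(⊤ : Subgroup Q), (⊤ : Subgroup Q)⁆ = ⊤ := by
  have hnormal : ⁅(⊤ : Subgroup Q), (⊤ : Subgroup Q)⁆.Normal := inferInstance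
  refine hnormal.eq_bot_or_eq_top.resolve_left fun hbot => ?_
  obtain ⟨a, b, hab⟩ := hQ
  have hmem := Subgroup.commutator_mem_commutator (Subgroup.mem_top a) (Subgroup.mem_top b)
  rw [hbot, Subgroup.mem_bot, commutatorElement_eq_one_iff_mul_comm] at hmem
  exact hab hmem

theorem MonoidHom.apply_eq_apply_of_ker_le {Q' : Type*} [Group Q'] {φ : Γ →* Q} {ψ : Γ →* Q'}
    (hle : φ.ker ≤ ψ.ker) {x y : Γ} (h : φ x = φ y) : ψ x = ψ y :=
  ψ.eq_iff.mpr (hle (φ.eq_iff.mp h))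

theorem MonoidHom.ker_eq_of_ker_le {Q' : Type*} [Group Q'] [IsSimpleGroup Q] [Nontrivial Q']
    {φ : Γ →* Q} {ψ : Γ →* Q'} (hφ : Function.Surjective φ) (hψ : Function.Surjective ψ)
    (hle : φ.ker ≤ ψ.ker) : φ.ker = ψ.ker := by
  refine le_antisymm hle ?_
  rcases ψ.normal_ker.map_eq_bot_or_eq_top hφ with hbot | htop
  · exact (Subgroup.map_eq_bot_iff _).mp hbot
  · exfalso
    obtain ⟨b, hb⟩ := exists_ne (1 : Q')
    obtain ⟨x, rfl⟩ := hψ b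
    obtain ⟨y, hy, hyx⟩ : φ x ∈ ψ.ker.map φ := htop ▸ Subgroup.mem_top _
    exact hb ((φ.apply_eq_apply_of_ker_le hle hyx.symm).trans (ψ.mem_ker.mp hy))

theorem Subgroup.map_biInf_eq_top {α : Type*} {φ : Γ →* Q} (hφ : Function.Surjective φ)
    (hQ : ⁅(⊤ : Subgroup Q), (⊤ : Subgroup Q)⁆ = ⊤) (N : α → Subgroup Γ) [∀ a, (N a).Normal]
    (s : Finset α) (h : ∀ a ∈ s, (N a).map φ = ⊤) : (⨅ a ∈ s, N a).map φ = ⊤ := by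
  classical
  induction s using Finset.induction_on with
  | empty => simpa using Subgroup.map_top_of_surjective φ hφ
  | insert b s _ ih =>
    have : (⨅ a ∈ s, N a).Normal :=
      Subgroup.normal_iInf_normal fun a => Subgroup.normal_iInf_normal fun _ => inferInstance
    rw [Finset.iInf_insert, eq_top_iff]
    calc ⊤ = ⁅(N b).map φ, (⨅ a ∈ s, N a).map φ⁆ := by
          rw [h b (Finset.mem_insert_self b s), ih fun a ha => h a (Finset.mem_insert_of_mem ha), hQ]
      _ = ⁅N b, ⨅ a ∈ s, N a⁆.map φ := (Subgroup.map_commutator _ _ φ).symm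
      _ ≤ (N b ⊓ ⨅ a ∈ s, N a).map φ := Subgroup.map_mono (Subgroup.commutator_le_inf _ _)

end SurjectionsToSimpleGroups

section FamilyOfSurjections

variable {Γ ι : Type*} [Group Γ] {G : ι → Type*} [∀ i, Group (G i)] {p : ∀ i, Γ →* G i}

theorem exists_apply_eq_of_ker_eq_and_eq_one_of_ker_ne [Finite ι] [∀ i, IsSimpleGroup (G i)]
    (hnonab : ∀ i, ∃ a b : G i, a * b ≠ b * a) (hp : ∀ i, Function.Surjective (p i))
    (x : Γ) (i : ι) :
    ∃ y : Γ, (∀ j, (p j).ker = (p i).ker → p j y = p j x) ∧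
      ∀ j, (p j).ker ≠ (p i).ker → p j y = 1 := by
  classical
  cases nonempty_fintype ι
  set s := Finset.univ.filter fun j => (p j).ker ≠ (p i).ker
  have hmap : (⨅ j ∈ s, (p j).ker).map (p i) = ⊤ := by
    refine Subgroup.map_biInf_eq_top (hp i) (IsSimpleGroup.commutator_top_eq_top (hnonab i)) _ s
      fun j hj => ((p j).normal_ker.map_eq_bot_or_eq_top (hp i)).resolve_left fun hbot => ?_
    exact (Finset.mem_filter.mp hj).2
      (MonoidHom.ker_eq_of_ker_le (hp j) (hp i) ((Subgroup.map_eq_bot_iff _).mp hbot))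
  obtain ⟨y, hy, hyx⟩ : p i x ∈ (⨅ j ∈ s, (p j).ker).map (p i) := hmap ▸ Subgroup.mem_top _
  refine ⟨y, fun j hj => ?_, fun j hj => ?_⟩
  · exact MonoidHom.apply_eq_apply_of_ker_le hj.ge hyx
  · exact Subgroup.mem_iInf.mp (Subgroup.mem_iInf.mp hy j) (by simpa [s] using hj)

end FamilyOfSurjections

theorem Subgroup.mem_of_forall_ite_mem {ι κ : Type*} [Finite κ] [DecidableEq κ]
    {G : ι → Type*} [∀ i, Group (G i)] {H : Subgroup (∀ i, G i)} (f : ι → κ) {g : ∀ i, G i}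
    (hg : ∀ k, (fun j => if f j = k then g j else 1) ∈ H) : g ∈ H := by
  cases nonempty_fintype κ
  suffices ∀ s : Finset κ, (fun j => if f j ∈ s then g j else 1) ∈ H by
    simpa using this Finset.univ
  intro s
  induction s using Finset.induction_on with
  | empty => simp [← Pi.one_def]
  | insert k s hks ih =>
    convert H.mul_mem (hg k) ih using 1
    funext j
    by_cases hj : f j = k
    · simp [hj, hks]
    · simp [hj]

theorem stmt_3 {ι : Type u} [Finite ι] (G : ι → Type v) [∀ i, Group (G i)]
    [∀ i, IsSimpleGroup (G i)]
    (hnonab : ∀ i, ∃ a b : G i, a * b ≠ b * a)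
    (H : Subgroup (∀ i, G i))
    (hsurj : ∀ i, Function.Surjective fun g : H => (g : ∀ j, G j) i) :
    ∃ (κ : Type u) (f : ι → κ), Function.Surjective f ∧
      ∃ Gh : (k : κ) → Subgroup (∀ i : {i // f i = k}, G i.1),
        (∀ (k : κ) (i : {i // f i = k}),
          Function.Bijective fun g : Gh k => (g : ∀ j : {j // f j = k}, G j.1) i) ∧
        ∀ g : ∀ i, G i, g ∈ H ↔ ∀ k : κ, (fun i : {i // f i = k} => g i.1) ∈ Gh k := by
  classical
  let p i : H →* G i := (Pi.evalMonoidHom G i).comp H.subtype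
  let f := Quotient.mk (Setoid.ker fun i => (p i).ker)
  have hf {i j : ι} : f i = f j ↔ (p i).ker = (p j).ker := Quotient.eq
  refine ⟨_, f, Quotient.mk_surjective,
    fun k => H.map (MonoidHom.pi fun i : {i // f i = k} => Pi.evalMonoidHom G i.1),
    fun k i => ⟨?_, ?_⟩, fun g => ⟨fun hg k => ⟨g, hg, rfl⟩, fun hg => ?_⟩⟩
  · rintro ⟨_, x, hx, rfl⟩ ⟨_, y, hy, rfl⟩ hxy
    exact Subtype.ext <| funext fun j => MonoidHom.apply_eq_apply_of_ker_le
      (φ := p i) (ψ := p j) (x := ⟨x, hx⟩) (y := ⟨y, hy⟩) (hf.mp (i.2.trans j.2.symm)).le hxy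
  · intro a
    obtain ⟨x, rfl⟩ := hsurj i a
    exact ⟨⟨_, Subgroup.mem_map_of_mem _ x.2⟩, rfl⟩
  · refine H.mem_of_forall_ite_mem f fun k => ?_
    obtain ⟨i, rfl⟩ := Quotient.mk_surjective k
    obtain ⟨x, hx, hxg⟩ := hg (f i)
    obtain ⟨y, hy_on, hy_off⟩ :=
      exists_apply_eq_of_ker_eq_and_eq_one_of_ker_ne (p := p) hnonab hsurj ⟨x, hx⟩ i
    convert y.2 using 1
    funext j
    split_ifs with hj
    · exact (congrFun hxg ⟨j, hj⟩).symm.trans (hy_on j (hf.mp hj)).symm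
    · exact (hy_off j (mt hf.mpr hj)).symm
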